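/- (Explicit invariant instanton on the smoothing of the conifold.) Suppose λ, μ, v0, v3 : (0,∞) → ℝ are continuously differentiable with λ > 0, μ > 0, v3 − v0 > 0, μ² = v3² − v0², (λv3)' = 3μ, (λv0)' = 0, and λ(t)·v0(t) = −2/3 for all t. Then the functions a0 ≡ 0, φ ≡ 0 and a1 = a2 = (3λ(v3 − v0))^(−1/2) satisfy the invariant monopole ODE system for a type-II Calabi–Yau structure, namely: a0' = −(4λ/μ²)·μ·(a0 − a1² + a2²), a1' = (3/(2λμ))((a0 − 1)a1 v3 − (a0 + 1)a2 v0) − 2·a2·φ, a2' = (3/(2λμ))((a0 − 1)a1 v0 − (a0 + 1)a2 v3) − 2·a1·φ, and φ' = (3/μ²)((a1² + a2² − 1)v0 − 2a1a2v3). -/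

import Mathlib

open Set

/-- The explicit invariant instanton on the smoothing of the conifold:
`a1 = a2 = (3λ(v3 − v0))^(−1/2)`. -/
noncomputable def explicitInstanton (lam v0 v3 : ℝ → ℝ) : ℝ → ℝ :=
  fun t => 1 / Real.sqrt (3 * lam t * (v3 t - v0 t))

/-- Suppose `λ, μ, v0, v3 : (0,∞) → ℝ` are C¹ with `λ > 0`, `μ > 0`, `v3 − v0 > 0`,
`μ² = v3² − v0²`, `(λv3)' = 3μ`, `(λv0)' = 0` and `λ·v0 = −2/3`.  Then `a0 ≡ 0`, `φ ≡ 0`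
and `a1 = a2 = (3λ(v3 − v0))^(−1/2)` solve the invariant monopole ODE system for a
type-II Calabi–Yau structure:
`a0' = −(4λ/μ²)·μ·(a0 − a1² + a2²)`,
`a1' = (3/(2λμ))((a0 − 1)a1v3 − (a0 + 1)a2v0) − 2a2φ`,
`a2' = (3/(2λμ))((a0 − 1)a1v0 − (a0 + 1)a2v3) − 2a1φ`,
`φ' = (3/μ²)((a1² + a2² − 1)v0 − 2a1a2v3)`. -/
theorem explicit_instanton_solves (lam mu v0 v3 : ℝ → ℝ)
    (hlamc : ContDiffOn ℝ 1 lam (Ioi 0)) (hmuc : ContDiffOn ℝ 1 mu (Ioi 0))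
    (hv0c : ContDiffOn ℝ 1 v0 (Ioi 0)) (hv3c : ContDiffOn ℝ 1 v3 (Ioi 0))
    (hlam : ∀ t ∈ Ioi (0 : ℝ), 0 < lam t)
    (hmu : ∀ t ∈ Ioi (0 : ℝ), 0 < mu t)
    (hv3v0 : ∀ t ∈ Ioi (0 : ℝ), 0 < v3 t - v0 t)
    (hmu2 : ∀ t ∈ Ioi (0 : ℝ), mu t ^ 2 = v3 t ^ 2 - v0 t ^ 2)
    (hlv3 : ∀ t ∈ Ioi (0 : ℝ), HasDerivAt (fun s => lam s * v3 s) (3 * mu t) t)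
    (hlv0 : ∀ t ∈ Ioi (0 : ℝ), HasDerivAt (fun s => lam s * v0 s) 0 t)
    (hconst : ∀ t ∈ Ioi (0 : ℝ), lam t * v0 t = -(2 / 3)) :
    ∀ t ∈ Ioi (0 : ℝ),
      HasDerivAt (fun _ : ℝ => (0 : ℝ))
        (-(4 * lam t / mu t ^ 2) * mu t *
          (0 - explicitInstanton lam v0 v3 t ^ 2 + explicitInstanton lam v0 v3 t ^ 2)) t ∧
      HasDerivAt (explicitInstanton lam v0 v3)
        (3 / (2 * lam t * mu t) *
            ((0 - 1) * explicitInstanton lam v0 v3 t * v3 t -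
              (0 + 1) * explicitInstanton lam v0 v3 t * v0 t) -
          2 * explicitInstanton lam v0 v3 t * 0) t ∧
      HasDerivAt (explicitInstanton lam v0 v3)
        (3 / (2 * lam t * mu t) *
            ((0 - 1) * explicitInstanton lam v0 v3 t * v0 t -
              (0 + 1) * explicitInstanton lam v0 v3 t * v3 t) -
          2 * explicitInstanton lam v0 v3 t * 0) t ∧
      HasDerivAt (fun _ : ℝ => (0 : ℝ))
        (3 / mu t ^ 2 *
          ((explicitInstanton lam v0 v3 t ^ 2 + explicitInstanton lam v0 v3 t ^ 2 - 1) * v0 t -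
            2 * (explicitInstanton lam v0 v3 t * explicitInstanton lam v0 v3 t) * v3 t)) t := by

  intro t ht
  have hl := hlam t ht
  have hm := hmu t ht
  have hd := hv3v0 t ht
  have hg : (0:ℝ) < 3 * lam t * (v3 t - v0 t) := by positivity
  have hS : 0 < Real.sqrt (3 * lam t * (v3 t - v0 t)) := Real.sqrt_pos.mpr hg
  have hS2 : Real.sqrt (3 * lam t * (v3 t - v0 t)) ^ 2 = 3 * lam t * (v3 t - v0 t) :=
    Real.sq_sqrt hg.le
  have hGd : HasDerivAt (fun s => 3 * lam s * (v3 s - v0 s)) (9 * mu t) t := by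
    have h1 := ((hlv3 t ht).sub (hlv0 t ht)).const_mul (3:ℝ)
    have heq : (fun s => 3 * (lam s * v3 s - lam s * v0 s)) =
        (fun s => 3 * lam s * (v3 s - v0 s)) := by funext s; ring
    rw [show (fun y => 3 * ((fun s => lam s * v3 s) - fun s => lam s * v0 s) y) =
        (fun s => 3 * lam s * (v3 s - v0 s)) from by funext s; simp only [Pi.sub_apply]; ring] at h1
    exact h1.congr_deriv (by ring)
  have hSd : HasDerivAt (fun s => Real.sqrt (3 * lam s * (v3 s - v0 s)))
      (9 * mu t / (2 * Real.sqrt (3 * lam t * (v3 t - v0 t)))) t :=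
    hGd.sqrt hg.ne'
  have hinv : HasDerivAt (fun s => (Real.sqrt (3 * lam s * (v3 s - v0 s)))⁻¹)
      (-(9 * mu t / (2 * Real.sqrt (3 * lam t * (v3 t - v0 t)))) /
        Real.sqrt (3 * lam t * (v3 t - v0 t)) ^ 2) t :=
    hSd.inv hS.ne'
  have hfun : explicitInstanton lam v0 v3 =
      fun s => (Real.sqrt (3 * lam s * (v3 s - v0 s)))⁻¹ := by
    funext s; simp [explicitInstanton, one_div]
  have hval : explicitInstanton lam v0 v3 t =
      (Real.sqrt (3 * lam t * (v3 t - v0 t)))⁻¹ := by rw [hfun]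
  have hmu2t := hmu2 t ht
  have hct := hconst t ht
  set S := Real.sqrt (3 * lam t * (v3 t - v0 t)) with hSdef
  refine ⟨?_, ?_, ?_, ?_⟩
  · have : -(4 * lam t / mu t ^ 2) * mu t *
        (0 - explicitInstanton lam v0 v3 t ^ 2 + explicitInstanton lam v0 v3 t ^ 2) = 0 := by
      ring
    rw [this]; exact hasDerivAt_const t 0
  · simp only [hfun]
    convert hinv using 1
    field_simp
    have hT : Real.sqrt 3 * Real.sqrt (lam t) * Real.sqrt (v3 t - v0 t) = S := by
      rw [hSdef, show (3:ℝ) * lam t * (v3 t - v0 t) = 3 * (lam t * (v3 t - v0 t)) by ring,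
        Real.sqrt_mul (by norm_num), Real.sqrt_mul hl.le]
      ring
    rw [← hSdef]
    linear_combination (-(3 * S * (v3 t + v0 t))) * hS2 + (9 * lam t * S) * hmu2t
  · simp only [hfun]
    convert hinv using 1
    field_simp
    have hT : Real.sqrt 3 * Real.sqrt (lam t) * Real.sqrt (v3 t - v0 t) = S := by
      rw [hSdef, show (3:ℝ) * lam t * (v3 t - v0 t) = 3 * (lam t * (v3 t - v0 t)) by ring,
        Real.sqrt_mul (by norm_num), Real.sqrt_mul hl.le]
      ring
    rw [← hSdef]
    linear_combination (-(3 * S * (v3 t + v0 t))) * hS2 + (9 * lam t * S) * hmu2t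
  · have : 3 / mu t ^ 2 *
        ((explicitInstanton lam v0 v3 t ^ 2 + explicitInstanton lam v0 v3 t ^ 2 - 1) * v0 t -
          2 * (explicitInstanton lam v0 v3 t * explicitInstanton lam v0 v3 t) * v3 t) = 0 := by
      rw [hval]
      have hm2 : mu t ^ 2 ≠ 0 := by positivity
      field_simp
      linear_combination (-(3 * v0 t)) * hS2 + (-(9 * (v3 t - v0 t))) * hct
    rw [this]; exact hasDerivAt_const t 0
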